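/- For every subset J ⊆ {1,…,l}, one has T_J = T ∩ P, where T is the Tits cone and P = {x ∈ ℝ^l : ⟨w(e_i), x⟩_B ≥ 0 for all w ∈ W_J and all i ∉ J}. -/

import Mathlib

open Matrix Finset

/-- The Gram matrix `B` with `B i i = 1` and `B i k = -(b i k)/2` for `i ≠ k`. -/
noncomputable def gramB (l : ℕ) (b : Fin l → Fin l → ℝ) : Matrix (Fin l) (Fin l) ℝ :=
  fun i k => if i = k then 1 else -(b i k) / 2

/-- The bilinear form `⟨v, w⟩_B = vᵀ B w`. -/
noncomputable def bform (l : ℕ) (b : Fin l → Fin l → ℝ) (v w : Fin l → ℝ) : ℝ :=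
  dotProduct v ((gramB l b).mulVec w)

/-- The matrix `M j` of the reflection `σ j (w) = w - 2⟨w, e j⟩_B e j`: it agrees with
the identity except in row `j`, where `(M j) j j = -1` and `(M j) j k = b j k` for `k ≠ j`. -/
noncomputable def reflM (l : ℕ) (b : Fin l → Fin l → ℝ) (j : Fin l) :
    Matrix (Fin l) (Fin l) ℝ :=
  fun r c => if r = j then (if c = j then -1 else b j c) else (if r = c then 1 else 0)

/-- The subgroup `W_J` generated by the reflections `σ j`, `j ∈ J` (since each `σ j` is an
involution, it coincides with the submonoid generated by them). -/
noncomputable def WJ (l : ℕ) (b : Fin l → Fin l → ℝ) (J : Set (Fin l)) :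
    Submonoid (Matrix (Fin l) (Fin l) ℝ) :=
  Submonoid.closure (reflM l b '' J)

/-- The fundamental chamber `D = {x : ⟨x, e i⟩_B ≥ 0 for all i}`. -/
noncomputable def chamberD (l : ℕ) (b : Fin l → Fin l → ℝ) : Set (Fin l → ℝ) :=
  {x | ∀ i : Fin l, 0 ≤ bform l b x (Pi.single i 1)}

/-- The cone `T_J = ⋃_{w ∈ W_J} w(D)`. -/
noncomputable def TJ (l : ℕ) (b : Fin l → Fin l → ℝ) (J : Set (Fin l)) : Set (Fin l → ℝ) :=
  {y | ∃ w ∈ WJ l b J, ∃ x ∈ chamberD l b, y = w.mulVec x}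

/-! Call a word in the reflections reduced if no two adjacent letters are equal; every element
of `W_J` is the product along a reduced word in `J`. Because `b_ij ≥ 2`, a reduced word whose
last letter is not `i` sends `e_i` to a nonnegative vector: the coordinate of the first letter
is the largest and grows at each step. Since `D` pairs nonnegatively with nonnegative vectors,
this gives `T_J ⊆ P`. Conversely, write a point of `T ∩ P` as `w x` with `w` reduced and
`x ∈ D` and peel letters off `w`: a letter in `J` is absorbed into `W_J`, while a letter
`j ∉ J` fixes the point, since `P` puts it on the positive side of the wall of `σ_j` and the
positivity above on the negative side. -/

section TitsCone

variable {l : ℕ} {b : Fin l → Fin l → ℝ}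

lemma gramB_isSymm (hsym : ∀ i j, i ≠ j → b i j = b j i) : (gramB l b).IsSymm := by
  ext i k
  rcases eq_or_ne i k with rfl | h
  · rfl
  · simp [gramB, h, Ne.symm h, hsym k i (Ne.symm h)]

lemma bform_comm (hsym : ∀ i j, i ≠ j → b i j = b j i) (v w : Fin l → ℝ) :
    bform l b v w = bform l b w v := by
  rw [bform, bform, dotProduct_mulVec, ← mulVec_transpose, (gramB_isSymm hsym).eq,
    dotProduct_comm]

lemma bform_single_self (j : Fin l) : bform l b (Pi.single j 1) (Pi.single j 1) = 1 := by
  simp [bform, gramB]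

lemma reflM_eq (hsym : ∀ i j, i ≠ j → b i j = b j i) (j : Fin l) :
    reflM l b j = 1 - vecMulVec (Pi.single j 1) ((2 : ℝ) • (gramB l b).col j) := by
  ext r c
  rcases eq_or_ne r j with rfl | hr
  · rcases eq_or_ne c r with rfl | hc
    · simp [reflM, gramB, vecMulVec_apply]; norm_num
    · simp [reflM, gramB, vecMulVec_apply, hc, Ne.symm hc, hsym c r hc]
      ring
  · simp [reflM, hr, one_apply, vecMulVec_apply]

lemma reflM_mulVec (hsym : ∀ i j, i ≠ j → b i j = b j i) (j : Fin l) (x : Fin l → ℝ) :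
    reflM l b j *ᵥ x = x - (2 * bform l b x (Pi.single j 1)) • Pi.single j 1 := by
  rw [reflM_eq hsym, sub_mulVec, one_mulVec, vecMulVec_mulVec, op_smul_eq_smul, bform,
    mulVec_single_one, smul_dotProduct, dotProduct_comm, smul_eq_mul]

lemma bform_sub_smul_left (v e w : Fin l → ℝ) (c : ℝ) :
    bform l b (v - c • e) w = bform l b v w - c * bform l b e w := by
  simp only [bform, sub_dotProduct, smul_dotProduct, smul_eq_mul]

lemma bform_sub_smul_right (v w e : Fin l → ℝ) (c : ℝ) :
    bform l b v (w - c • e) = bform l b v w - c * bform l b v e := by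
  simp only [bform, mulVec_sub, mulVec_smul, dotProduct_sub, dotProduct_smul, smul_eq_mul]

lemma reflM_mulVec_single_self (hsym : ∀ i j, i ≠ j → b i j = b j i) (j : Fin l) :
    reflM l b j *ᵥ Pi.single j 1 = -Pi.single j 1 := by
  rw [reflM_mulVec hsym, bform_single_self]
  module

lemma reflM_mulVec_of_bform_eq_zero (hsym : ∀ i j, i ≠ j → b i j = b j i) {j : Fin l}
    {x : Fin l → ℝ} (hx : bform l b x (Pi.single j 1) = 0) : reflM l b j *ᵥ x = x := by
  rw [reflM_mulVec hsym, hx]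
  simp

lemma reflM_mulVec_reflM_mulVec (hsym : ∀ i j, i ≠ j → b i j = b j i) (j : Fin l)
    (x : Fin l → ℝ) : reflM l b j *ᵥ (reflM l b j *ᵥ x) = x := by
  rw [reflM_mulVec hsym j x, mulVec_sub, mulVec_smul, reflM_mulVec_single_self hsym,
    reflM_mulVec hsym]
  module

lemma reflM_mul_self (hsym : ∀ i j, i ≠ j → b i j = b j i) (j : Fin l) :
    reflM l b j * reflM l b j = 1 :=
  ext_of_mulVec_single fun i => by
    rw [← mulVec_mulVec, reflM_mulVec_reflM_mulVec hsym, one_mulVec]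

lemma bform_reflM_mulVec_right (hsym : ∀ i j, i ≠ j → b i j = b j i) (j : Fin l)
    (v u : Fin l → ℝ) : bform l b v (reflM l b j *ᵥ u) = bform l b (reflM l b j *ᵥ v) u := by
  rw [reflM_mulVec hsym, reflM_mulVec hsym, bform_sub_smul_left, bform_sub_smul_right,
    bform_comm hsym (Pi.single j 1) u]
  ring

variable (l b) in
noncomputable def wordProd (L : List (Fin l)) : Matrix (Fin l) (Fin l) ℝ :=
  (L.map (reflM l b)).prod

@[simp] lemma wordProd_nil : wordProd l b [] = 1 := rfl

@[simp] lemma wordProd_cons (j : Fin l) (L : List (Fin l)) :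
    wordProd l b (j :: L) = reflM l b j * wordProd l b L := List.prod_cons

@[simp] lemma wordProd_append (L L' : List (Fin l)) :
    wordProd l b (L ++ L') = wordProd l b L * wordProd l b L' := by
  simp [wordProd]

lemma WJ_mono {J K : Set (Fin l)} (h : J ⊆ K) : WJ l b J ≤ WJ l b K :=
  Submonoid.closure_mono (Set.image_mono h)

lemma reflM_mem_WJ {J : Set (Fin l)} {j : Fin l} (hj : j ∈ J) : reflM l b j ∈ WJ l b J :=
  Submonoid.subset_closure (Set.mem_image_of_mem _ hj)

lemma wordProd_mem_WJ {J : Set (Fin l)} {L : List (Fin l)} (hL : ∀ j ∈ L, j ∈ J) :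
    wordProd l b L ∈ WJ l b J := by
  induction L with
  | nil => exact one_mem _
  | cons j L ih =>
    simp only [List.forall_mem_cons] at hL
    exact mul_mem (reflM_mem_WJ hL.1) (ih hL.2)

lemma exists_reduced_word (hsym : ∀ i j, i ≠ j → b i j = b j i) {J : Set (Fin l)}
    {w : Matrix (Fin l) (Fin l) ℝ} (hw : w ∈ WJ l b J) :
    ∃ L : List (Fin l), L.IsChain (· ≠ ·) ∧ (∀ j ∈ L, j ∈ J) ∧ wordProd l b L = w := by
  induction hw using Submonoid.closure_induction_left with
  | one => exact ⟨[], .nil, by simp, rfl⟩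
  | mul_left _ hM _ _ ih =>
    obtain ⟨j, hj, rfl⟩ := hM
    obtain ⟨L, hchain, hLJ, rfl⟩ := ih
    cases L with
    | nil => exact ⟨[j], .singleton j, by simpa using hj, by simp⟩
    | cons k L =>
      by_cases hjk : j = k
      · subst hjk
        refine ⟨L, hchain.tail, fun i hi => hLJ i (List.mem_cons_of_mem j hi), ?_⟩
        rw [wordProd_cons, ← mul_assoc, reflM_mul_self hsym, one_mul]
      · refine ⟨j :: k :: L, List.isChain_cons_cons.mpr ⟨hjk, hchain⟩, ?_, rfl⟩
        simpa [hj] using hLJ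

lemma bform_wordProd_mulVec_right (hsym : ∀ i j, i ≠ j → b i j = b j i) (L : List (Fin l))
    (v u : Fin l → ℝ) :
    bform l b v (wordProd l b L *ᵥ u) = bform l b (wordProd l b L.reverse *ᵥ v) u := by
  induction L generalizing v with
  | nil => simp
  | cons j L ih =>
    rw [wordProd_cons, ← mulVec_mulVec, bform_reflM_mulVec_right hsym, ih, List.reverse_cons,
      wordProd_append, wordProd_cons, wordProd_nil, mul_one, mulVec_mulVec]

def NonnegPeakAt (v : Fin l → ℝ) (h : Fin l) : Prop :=
  0 ≤ v ∧ 1 ≤ v h ∧ ∀ k, v k ≤ v h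

lemma reflM_mulVec_apply_of_ne {j k : Fin l} (hk : k ≠ j) (x : Fin l → ℝ) :
    (reflM l b j *ᵥ x) k = x k := by
  simp [mulVec, dotProduct, reflM, hk, ite_mul]

lemma reflM_mulVec_apply_self (j : Fin l) (x : Fin l → ℝ) :
    (reflM l b j *ᵥ x) j = -x j + ∑ k ∈ univ.erase j, b j k * x k := by
  rw [mulVec, dotProduct, ← add_sum_erase _ _ (mem_univ j)]
  congr 1
  · simp [reflM]
  · exact sum_congr rfl fun k hk => by simp [reflM, (mem_erase.mp hk).1]

lemma reflM_mulVec_nonnegPeakAt (hge : ∀ i j, i ≠ j → 2 ≤ b i j) {j h : Fin l} (hjh : j ≠ h)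
    {v : Fin l → ℝ} (hv : NonnegPeakAt v h) : NonnegPeakAt (reflM l b j *ᵥ v) j := by
  obtain ⟨hv0, hvh, hvmax⟩ := hv
  have hpeak : v h ≤ (reflM l b j *ᵥ v) j := by
    have hterm : b j h * v h ≤ ∑ k ∈ univ.erase j, b j k * v k :=
      single_le_sum (f := fun k => b j k * v k)
        (fun k hk => mul_nonneg (by linarith [hge j k (mem_erase.mp hk).1.symm]) (hv0 k))
        (mem_erase.mpr ⟨hjh.symm, mem_univ h⟩)
    rw [reflM_mulVec_apply_self]
    -- `-v j + b j h * v h ≥ -v h + 2 * v h`: this is where `b_ij ≥ 2` is needed.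
    nlinarith [hge j h hjh, hvmax j, hv0 h]
  refine ⟨fun k => ?_, hvh.trans hpeak, fun k => ?_⟩
  · rcases eq_or_ne k j with rfl | hk
    · exact (hv0 h).trans hpeak
    · rw [reflM_mulVec_apply_of_ne hk]
      exact hv0 k
  · rcases eq_or_ne k j with rfl | hk
    · exact le_rfl
    · rw [reflM_mulVec_apply_of_ne hk]
      exact (hvmax k).trans hpeak

lemma exists_mem_head?_append_singleton (L : List (Fin l)) (i : Fin l) :
    ∃ h, h ∈ (L ++ [i]).head? := by
  cases L <;> simp

lemma wordProd_mulVec_single_nonnegPeakAt (hge : ∀ i j, i ≠ j → 2 ≤ b i j) (i : Fin l) :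
    ∀ {L : List (Fin l)}, (L ++ [i]).IsChain (· ≠ ·) →
      ∀ h ∈ (L ++ [i]).head?, NonnegPeakAt (wordProd l b L *ᵥ Pi.single i 1) h
  | [], _, h, hh => by
    obtain rfl : h = i := by simpa [eq_comm] using hh
    rw [wordProd_nil, one_mulVec]
    refine ⟨Pi.single_nonneg.mpr zero_le_one, by simp, fun k => ?_⟩
    rcases eq_or_ne k h with rfl | hk
    · exact le_rfl
    · simp [Pi.single_eq_of_ne hk]
  | j :: L, hc, h, hh => by
    obtain rfl : h = j := by simpa [eq_comm] using hh
    rw [List.cons_append, List.isChain_cons] at hc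
    obtain ⟨h', hh'⟩ := exists_mem_head?_append_singleton L i
    rw [wordProd_cons, ← mulVec_mulVec]
    exact reflM_mulVec_nonnegPeakAt hge (hc.1 h' hh')
      (wordProd_mulVec_single_nonnegPeakAt hge i hc.2 h' hh')

lemma wordProd_mulVec_single_nonneg (hge : ∀ i j, i ≠ j → 2 ≤ b i j) {i : Fin l}
    {L : List (Fin l)} (hL : (L ++ [i]).IsChain (· ≠ ·)) :
    0 ≤ wordProd l b L *ᵥ Pi.single i 1 := by
  obtain ⟨h, hh⟩ := exists_mem_head?_append_singleton L i
  exact (wordProd_mulVec_single_nonnegPeakAt hge i hL h hh).1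

lemma mulVec_single_nonneg_of_mem_WJ (hsym : ∀ i j, i ≠ j → b i j = b j i)
    (hge : ∀ i j, i ≠ j → 2 ≤ b i j) {J : Set (Fin l)} {w : Matrix (Fin l) (Fin l) ℝ}
    (hw : w ∈ WJ l b J) {i : Fin l} (hi : i ∉ J) : 0 ≤ w *ᵥ Pi.single i 1 := by
  obtain ⟨L, hchain, hLJ, rfl⟩ := exists_reduced_word hsym hw
  refine wordProd_mulVec_single_nonneg hge (List.isChain_append.mpr ⟨hchain, .singleton i, ?_⟩)
  intro k hk i' hi'
  obtain rfl : i' = i := by simpa [eq_comm] using hi'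
  exact ne_of_mem_of_not_mem (hLJ k (List.mem_of_mem_getLast? hk)) hi

lemma bform_nonneg_of_mem_chamberD (hsym : ∀ i j, i ≠ j → b i j = b j i) {x v : Fin l → ℝ}
    (hx : x ∈ chamberD l b) (hv : 0 ≤ v) : 0 ≤ bform l b v x :=
  dotProduct_nonneg_of_nonneg hv fun k => by
    have hk := hx k
    rwa [bform_comm hsym, bform, single_dotProduct, one_mul] at hk

def PJ (l : ℕ) (b : Fin l → Fin l → ℝ) (J : Set (Fin l)) : Set (Fin l → ℝ) :=
  {x | ∀ w ∈ WJ l b J, ∀ i : Fin l, i ∉ J → 0 ≤ bform l b (w *ᵥ Pi.single i 1) x}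

lemma TJ_subset_PJ (hsym : ∀ i j, i ≠ j → b i j = b j i) (hge : ∀ i j, i ≠ j → 2 ≤ b i j)
    (J : Set (Fin l)) : TJ l b J ⊆ PJ l b J := by
  rintro _ ⟨w, hw, x, hx, rfl⟩ u hu i hi
  obtain ⟨L, -, hLJ, rfl⟩ := exists_reduced_word hsym hw
  have hLrev : wordProd l b L.reverse ∈ WJ l b J :=
    wordProd_mem_WJ fun j hj => hLJ j (List.mem_reverse.mp hj)
  rw [bform_wordProd_mulVec_right hsym, mulVec_mulVec]
  exact bform_nonneg_of_mem_chamberD hsym hx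
    (mulVec_single_nonneg_of_mem_WJ hsym hge (mul_mem hLrev hu) hi)

lemma TJ_mono {J K : Set (Fin l)} (h : J ⊆ K) : TJ l b J ⊆ TJ l b K := by
  rintro _ ⟨w, hw, x, hx, rfl⟩
  exact ⟨w, WJ_mono h hw, x, hx, rfl⟩

lemma reflM_mulVec_mem_TJ {J : Set (Fin l)} {j : Fin l} (hj : j ∈ J) {y : Fin l → ℝ}
    (hy : y ∈ TJ l b J) : reflM l b j *ᵥ y ∈ TJ l b J := by
  obtain ⟨w, hw, x, hx, rfl⟩ := hy
  exact ⟨reflM l b j * w, mul_mem (reflM_mem_WJ hj) hw, x, hx, mulVec_mulVec _ _ _⟩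

lemma reflM_mulVec_mem_PJ (hsym : ∀ i j, i ≠ j → b i j = b j i) {J : Set (Fin l)} {j : Fin l}
    (hj : j ∈ J) {y : Fin l → ℝ} (hy : y ∈ PJ l b J) : reflM l b j *ᵥ y ∈ PJ l b J := by
  intro u hu i hi
  rw [bform_reflM_mulVec_right hsym, mulVec_mulVec]
  exact hy _ (mul_mem (reflM_mem_WJ hj) hu) i hi

lemma bform_single_wordProd_cons_mulVec_nonpos (hsym : ∀ i j, i ≠ j → b i j = b j i)
    (hge : ∀ i j, i ≠ j → 2 ≤ b i j) {x : Fin l → ℝ} (hx : x ∈ chamberD l b) {j : Fin l}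
    {L : List (Fin l)} (hL : (j :: L).IsChain (· ≠ ·)) :
    bform l b (Pi.single j 1) (wordProd l b (j :: L) *ᵥ x) ≤ 0 := by
  have hrev : (L.reverse ++ [j]).IsChain (· ≠ ·) := by
    rw [← List.reverse_cons, List.isChain_reverse]
    exact hL.imp fun _ _ h => h.symm
  rw [bform_wordProd_mulVec_right hsym, List.reverse_cons, wordProd_append, ← mulVec_mulVec,
    wordProd_cons, wordProd_nil, mul_one, reflM_mulVec_single_self hsym, mulVec_neg]
  simpa only [bform, neg_dotProduct, neg_nonpos] using
    bform_nonneg_of_mem_chamberD hsym hx (wordProd_mulVec_single_nonneg hge hrev)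

lemma wordProd_mulVec_mem_TJ_of_mem_PJ (hsym : ∀ i j, i ≠ j → b i j = b j i)
    (hge : ∀ i j, i ≠ j → 2 ≤ b i j) {J : Set (Fin l)} {x : Fin l → ℝ}
    (hx : x ∈ chamberD l b) :
    ∀ {L : List (Fin l)}, L.IsChain (· ≠ ·) →
      wordProd l b L *ᵥ x ∈ PJ l b J → wordProd l b L *ᵥ x ∈ TJ l b J
  | [], _, _ => ⟨1, one_mem _, x, hx, by simp⟩
  | j :: L, hL, hP => by
    have ih := wordProd_mulVec_mem_TJ_of_mem_PJ hsym hge hx (J := J) (L := L) hL.tail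
    by_cases hj : j ∈ J
    · rw [wordProd_cons, ← mulVec_mulVec] at hP ⊢
      refine reflM_mulVec_mem_TJ hj (ih ?_)
      simpa only [reflM_mulVec_reflM_mulVec hsym] using reflM_mulVec_mem_PJ hsym hj hP
    · have hwall : bform l b (wordProd l b (j :: L) *ᵥ x) (Pi.single j 1) = 0 := by
        rw [bform_comm hsym]
        refine le_antisymm (bform_single_wordProd_cons_mulVec_nonpos hsym hge hx hL) ?_
        simpa only [one_mulVec] using hP 1 (one_mem _) j hj
      have hfix : wordProd l b L *ᵥ x = wordProd l b (j :: L) *ᵥ x := by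
        rw [← reflM_mulVec_of_bform_eq_zero hsym hwall, wordProd_cons, ← mulVec_mulVec,
          reflM_mulVec_reflM_mulVec hsym]
      rw [← hfix] at hP ⊢
      exact ih hP

end TitsCone

theorem TJ_eq_tits_inter_general (l : ℕ) (b : Fin l → Fin l → ℝ)
    (hsym : ∀ i j, i ≠ j → b i j = b j i) (hge : ∀ i j, i ≠ j → 2 ≤ b i j)
    (J : Set (Fin l)) :
    TJ l b J = TJ l b Set.univ ∩
      {x | ∀ w ∈ WJ l b J, ∀ i : Fin l, i ∉ J →
        0 ≤ bform l b (w.mulVec (Pi.single i 1)) x} := by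
  refine Set.Subset.antisymm
    (fun y hy => ⟨TJ_mono (Set.subset_univ J) hy, TJ_subset_PJ hsym hge J hy⟩) ?_
  rintro _ ⟨⟨w, hw, x, hx, rfl⟩, hP⟩
  obtain ⟨L, hL, -, rfl⟩ := exists_reduced_word hsym hw
  exact wordProd_mulVec_mem_TJ_of_mem_PJ hsym hge hx hL hP

/-- **`T_J` is cut out of the Tits cone `T` by half-spaces**:
`T_J = T ∩ P` where `T = T_{{1,…,l}}` is the Tits cone and
`P = {x : ⟨w(e i), x⟩_B ≥ 0 for all w ∈ W_J, i ∉ J}`. -/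
theorem TJ_eq_tits_inter (l : ℕ) (hl : 2 ≤ l) (b : Fin l → Fin l → ℝ)
    (hsym : ∀ i j, i ≠ j → b i j = b j i) (hge : ∀ i j, i ≠ j → 2 ≤ b i j)
    (J : Set (Fin l)) :
    TJ l b J = TJ l b Set.univ ∩
      {x | ∀ w ∈ WJ l b J, ∀ i : Fin l, i ∉ J →
        0 ≤ bform l b (w.mulVec (Pi.single i 1)) x} :=
  TJ_eq_tits_inter_general l b hsym hge J
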